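/- Let G be a finite connected simple graph with n vertices and m edges, q : D(G) → ℍ a map, U the quaternionic transition matrix determined by q, and W, D_w the quaternionic weighted matrix and weighted degree matrix with weight w = q. Then for every λ ∈ ℂ, det(λ·I_{4m} − ψ(U)) = (λ² − 1)^{2m−2n} · det(λ²·I_{2n} − λ·ψ(ᵀW) + ψ(D_w) − I_{2n}). -/

import Mathlib

noncomputable section

open Matrix

/-- Simplex part of a quaternion: `q = Sc q + j * Pc q`. -/
def Sc (q : Quaternion ℝ) : ℂ := ⟨q.re, q.imI⟩

/-- Perplex part of a quaternion: `q = Sc q + j * Pc q`. -/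
def Pc (q : Quaternion ℝ) : ℂ := ⟨q.imJ, -q.imK⟩

/-- The map ψ sending a quaternionic matrix `M = M^S + j·M^P` (symplectic decomposition)
to the complex block matrix `[[M^S, -conj(M^P)], [M^P, conj(M^S)]]`. -/
def psi {I J : Type*} (M : Matrix I J (Quaternion ℝ)) :
    Matrix (I ⊕ I) (J ⊕ J) ℂ :=
  Matrix.fromBlocks (M.map Sc) (-((M.map Pc).map (starRingEnd ℂ)))
    (M.map Pc) ((M.map Sc).map (starRingEnd ℂ))

variable {V : Type*}

/-- The quaternionic weighted matrix W: `W u v = w((u,v))` if `(u,v)` is an arc, else 0. -/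
def quatWeightMatrix [Fintype V] [DecidableEq V] (G : SimpleGraph V) [DecidableRel G.Adj]
    (w : G.Dart → Quaternion ℝ) : Matrix V V (Quaternion ℝ) := fun u v =>
  if h : G.Adj u v then w ⟨(u, v), h⟩ else 0

/-- The quaternionic weighted arc matrix B_w: `(B_w) e f = w(f)` if `t(e) = o(f)`, else 0. -/
def quatArcMatrix [Fintype V] [DecidableEq V] (G : SimpleGraph V) [DecidableRel G.Adj]
    (w : G.Dart → Quaternion ℝ) : Matrix G.Dart G.Dart (Quaternion ℝ) := fun e f =>
  if e.toProd.2 = f.toProd.1 then w f else 0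

/-- The quaternionic arc-inversion matrix J₀: `(J₀) e f = 1` if `f = e⁻¹`, else 0. -/
def quatArcInvMatrix [Fintype V] [DecidableEq V] (G : SimpleGraph V) [DecidableRel G.Adj] :
    Matrix G.Dart G.Dart (Quaternion ℝ) := fun e f =>
  if f = e.symm then 1 else 0

/-- The quaternionic weighted degree matrix D_w: diagonal with
`(D_w)_{uu} = Σ_{e : o(e) = u} w(e)`. -/
def quatDegMatrix [Fintype V] [DecidableEq V] (G : SimpleGraph V) [DecidableRel G.Adj]
    (w : G.Dart → Quaternion ℝ) : Matrix V V (Quaternion ℝ) :=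
  Matrix.diagonal fun u => ∑ e : G.Dart, if e.toProd.1 = u then w e else 0

/-- The 2m×n matrix K: `K e v = w(e)` if `o(e) = v`, else 0. -/
def quatKMatrix [Fintype V] [DecidableEq V] (G : SimpleGraph V) [DecidableRel G.Adj]
    (w : G.Dart → Quaternion ℝ) : Matrix G.Dart V (Quaternion ℝ) := fun e v =>
  if e.toProd.1 = v then w e else 0

/-- The 2m×n matrix L: `L e v = 1` if `t(e) = v`, else 0. -/
def quatLMatrix [Fintype V] [DecidableEq V] (G : SimpleGraph V) [DecidableRel G.Adj] :
    Matrix G.Dart V (Quaternion ℝ) := fun e v =>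
  if e.toProd.2 = v then 1 else 0

/-- The quaternionic transition matrix determined by `q : D(G) → ℍ`:
`U e f = q(e)` if `t(f) = o(e)` and `f ≠ e⁻¹`, `U e f = q(e) − 1` if `f = e⁻¹`,
`0` otherwise. -/
def quatTransition [Fintype V] [DecidableEq V] (G : SimpleGraph V) [DecidableRel G.Adj]
    (q : G.Dart → Quaternion ℝ) : Matrix G.Dart G.Dart (Quaternion ℝ) := fun e f =>
  if f = e.symm then q e - 1
  else if f.toProd.2 = e.toProd.1 then q e else 0

/-!
Write `U = K Lᵀ - J₀` and put `A = ψ(K)`, `B = ψ(ᵀL)`, `J = ψ(J₀)`; `ψ` is multiplicative, so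
`ψ(U) = A B - J`, `B A = ψ(ᵀW)` and `B J A = ψ(D_w)`. Since `J² = 1`,
`(λ - A B + J)(λ - J) = (λ² - 1) - A (λ B - B J)`, and Sylvester's identity
`t^|β| det(t - A C) = t^|α| det(t - C A)` turns the `4m`-dimensional determinant into a
`2n`-dimensional one. The factor `det(λ - J) = (λ² - 1)^(2m)` comes from the same identity,
since `J₀ = N Nᵀ - 1` for the dart–edge incidence matrix `N`, which has `Nᵀ N = 2`.
Dividing by `λ² - 1` is legitimate off `λ = ±1`, and continuity in `λ` covers those two points.
-/

section SylvesterDeterminant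
variable {R : Type*} [CommRing R] {α β : Type*} [Fintype α] [Fintype β] [DecidableEq α]
  [DecidableEq β]

theorem det_smul_one_sub_mul_comm (A : Matrix α β R) (B : Matrix β α R) (t : R) :
    t ^ Fintype.card β * (t • (1 : Matrix α α R) - A * B).det =
      t ^ Fintype.card α * (t • (1 : Matrix β β R) - B * A).det := by
  simpa [eval_charpoly, smul_one_eq_diagonal] using
    congr_arg (Polynomial.eval t) (charpoly_mul_comm' A B)

theorem det_smul_one_sub_mul_sub_involution (A : Matrix α β R) (B : Matrix β α R)
    {J : Matrix α α R} (hJ : J * J = 1) (t : R) :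
    (t ^ 2 - 1) ^ Fintype.card β * (t • 1 - (A * B - J)).det * (t • 1 - J).det =
      (t ^ 2 - 1) ^ Fintype.card α * ((t ^ 2 - 1) • 1 - t • (B * A) + B * J * A).det := by
  have hfactor :
      (t • 1 - (A * B - J)) * (t • 1 - J) = (t ^ 2 - 1) • 1 - A * (t • B - B * J) := by
    simp only [Matrix.sub_mul, Matrix.mul_sub, smul_mul_assoc, mul_smul_comm, Matrix.mul_smul,
      Matrix.one_mul, Matrix.mul_one, hJ, Matrix.mul_assoc, smul_smul, sub_smul,
      one_smul, sq, smul_sub]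
    abel
  have hswap :
      (t ^ 2 - 1) • 1 - (t • B - B * J) * A = (t ^ 2 - 1) • 1 - t • (B * A) + B * J * A := by
    rw [Matrix.sub_mul, Matrix.smul_mul]
    abel
  rw [mul_assoc, ← det_mul, hfactor, det_smul_one_sub_mul_comm, hswap]

end SylvesterDeterminant

theorem Sc_add (a b : Quaternion ℝ) : Sc (a + b) = Sc a + Sc b := by
  apply Complex.ext <;> simp [Sc]

theorem Pc_add (a b : Quaternion ℝ) : Pc (a + b) = Pc a + Pc b := by
  apply Complex.ext <;> simp [Pc]
  ring

theorem Sc_neg (a : Quaternion ℝ) : Sc (-a) = -Sc a := by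
  apply Complex.ext <;> simp [Sc]

theorem Pc_neg (a : Quaternion ℝ) : Pc (-a) = -Pc a := by
  apply Complex.ext <;> simp [Pc]

@[simp] theorem Sc_zero : Sc 0 = 0 := by
  apply Complex.ext <;> simp [Sc, Quaternion.re_zero, Quaternion.imI_zero]
@[simp] theorem Pc_zero : Pc 0 = 0 := by
  apply Complex.ext <;> simp [Pc, Quaternion.imJ_zero, Quaternion.imK_zero]
@[simp] theorem Sc_one : Sc 1 = 1 := by
  apply Complex.ext <;> simp [Sc, Quaternion.re_one, Quaternion.imI_one]
@[simp] theorem Pc_one : Pc 1 = 0 := by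
  apply Complex.ext <;> simp [Pc, Quaternion.imJ_one, Quaternion.imK_one]

theorem Sc_mul (a b : Quaternion ℝ) :
    Sc (a * b) = Sc a * Sc b - starRingEnd ℂ (Pc a) * Pc b := by
  apply Complex.ext <;> simp [Sc, Pc] <;> ring

theorem Pc_mul (a b : Quaternion ℝ) :
    Pc (a * b) = starRingEnd ℂ (Sc a) * Pc b + Pc a * Sc b := by
  apply Complex.ext <;> simp [Sc, Pc] <;> ring

theorem Sc_sum {ι : Type*} (s : Finset ι) (f : ι → Quaternion ℝ) :
    Sc (∑ i ∈ s, f i) = ∑ i ∈ s, Sc (f i) :=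
  map_sum (AddMonoidHom.mk' Sc Sc_add) f s

theorem Pc_sum {ι : Type*} (s : Finset ι) (f : ι → Quaternion ℝ) :
    Pc (∑ i ∈ s, f i) = ∑ i ∈ s, Pc (f i) :=
  map_sum (AddMonoidHom.mk' Pc Pc_add) f s

section Psi
variable {I J K : Type*}

theorem psi_add (M N : Matrix I J (Quaternion ℝ)) : psi (M + N) = psi M + psi N := by
  ext (i|i) (j|j) <;> simp [psi, Sc_add, Pc_add, add_comm]

theorem psi_sub (M N : Matrix I J (Quaternion ℝ)) : psi (M - N) = psi M - psi N := by
  simp only [sub_eq_add_neg, psi_add]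
  congr 1
  ext (i|i) (j|j) <;> simp [psi, Sc_neg, Pc_neg]

theorem psi_one [DecidableEq I] : psi (1 : Matrix I I (Quaternion ℝ)) = 1 := by
  ext (i|i) (j|j) <;> simp [psi, one_apply, apply_ite Pc]

theorem psi_mul [Fintype J] (M : Matrix I J (Quaternion ℝ)) (N : Matrix J K (Quaternion ℝ)) :
    psi (M * N) = psi M * psi N := by
  ext (i|i) (k|k) <;>
  · simp only [psi, mul_apply, fromBlocks_apply₁₁, fromBlocks_apply₁₂, fromBlocks_apply₂₁,
      fromBlocks_apply₂₂, map_apply, Matrix.neg_apply, Fintype.sum_sum_type, Sc_sum, Pc_sum,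
      map_sum, ← Finset.sum_neg_distrib, ← Finset.sum_add_distrib]
    refine Finset.sum_congr rfl fun j _ => ?_
    simp only [Sc_mul, Pc_mul, map_mul, map_sub, map_add, Complex.conj_conj]
    ring

theorem psi_two [DecidableEq I] : psi (2 : Matrix I I (Quaternion ℝ)) = 2 := by
  rw [← one_add_one_eq_two, psi_add, psi_one, one_add_one_eq_two]

end Psi

theorem SimpleGraph.Dart.eq_symm_comm {G : SimpleGraph V} {d d' : G.Dart} :
    d = d'.symm ↔ d' = d.symm := by
  rw [eq_comm, SimpleGraph.Dart.symm_involutive.eq_iff]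

section Graph
variable [Fintype V] [DecidableEq V] (G : SimpleGraph V) [DecidableRel G.Adj]
  (q : G.Dart → Quaternion ℝ)

theorem quatTransition_eq_mul_sub :
    quatTransition G q = quatKMatrix G q * (quatLMatrix G)ᵀ - quatArcInvMatrix G := by
  ext e f : 1
  simp only [Matrix.sub_apply, mul_apply, transpose_apply, quatTransition, quatKMatrix,
    quatLMatrix, quatArcInvMatrix, mul_ite, mul_one, mul_zero]
  by_cases hf : f = e.symm <;> simp [hf, eq_comm]

theorem quatLMatrix_transpose_mul_quatKMatrix :
    (quatLMatrix G)ᵀ * quatKMatrix G q = (quatWeightMatrix G q)ᵀ := by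
  ext u v : 1
  simp only [mul_apply, transpose_apply, quatLMatrix, quatKMatrix, quatWeightMatrix, ite_mul,
    one_mul, zero_mul, ← ite_and]
  by_cases h : G.Adj v u
  · rw [dif_pos h, Fintype.sum_eq_single ⟨(v, u), h⟩ fun d hd => if_neg ?_]
    · simp
    · exact fun ⟨h₁, h₂⟩ => hd (SimpleGraph.Dart.ext _ _ (Prod.ext h₂ h₁))
  · rw [dif_neg h]
    exact Finset.sum_eq_zero fun d _ => if_neg fun ⟨h₁, h₂⟩ => h (h₁ ▸ h₂ ▸ d.adj)

theorem quatArcInvMatrix_mul_self : quatArcInvMatrix G * quatArcInvMatrix G = 1 := by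
  ext e f : 1
  simp [mul_apply, quatArcInvMatrix, one_apply, SimpleGraph.Dart.eq_symm_comm (d := f),
    SimpleGraph.Dart.symm_involutive.injective.eq_iff, eq_comm]

theorem quatLMatrix_transpose_mul_quatArcInvMatrix :
    (quatLMatrix G)ᵀ * quatArcInvMatrix G = of fun u f => if f.toProd.1 = u then 1 else 0 := by
  ext u f : 1
  simp [mul_apply, quatLMatrix, quatArcInvMatrix, SimpleGraph.Dart.eq_symm_comm (d := f)]

theorem quatLMatrix_transpose_mul_quatArcInvMatrix_mul_quatKMatrix :
    (quatLMatrix G)ᵀ * quatArcInvMatrix G * quatKMatrix G q = quatDegMatrix G q := by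
  rw [quatLMatrix_transpose_mul_quatArcInvMatrix]
  ext u v : 1
  simp only [mul_apply, of_apply, quatKMatrix, quatDegMatrix, diagonal_apply, ite_mul, one_mul,
    zero_mul, ← ite_and]
  by_cases huv : u = v
  · simp [huv]
  · rw [if_neg huv]
    exact Finset.sum_eq_zero fun d _ => if_neg fun ⟨h₁, h₂⟩ => huv (h₁ ▸ h₂)

def dartEdgeMatrix : Matrix G.Dart G.edgeSet (Quaternion ℝ) :=
  of fun d e => if d.edge = e then 1 else 0

theorem dartEdgeMatrix_mul_transpose :
    dartEdgeMatrix G * (dartEdgeMatrix G)ᵀ = 1 + quatArcInvMatrix G := by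
  ext d d' : 1
  have hsum : ∑ e : G.edgeSet, dartEdgeMatrix G d e * dartEdgeMatrix G d' e =
      if d.edge = d'.edge then 1 else 0 := by
    rw [Fintype.sum_eq_single ⟨d.edge, d.edge_mem⟩ fun e he => ?_]
    · simp [dartEdgeMatrix, eq_comm]
    · have hne : d.edge ≠ e := fun h => he (Subtype.ext h.symm)
      simp [dartEdgeMatrix, hne]
  simp only [mul_apply, transpose_apply, hsum, Matrix.add_apply, one_apply, quatArcInvMatrix,
    SimpleGraph.dart_edge_eq_iff]
  by_cases h : d = d'
  · simp [h, d'.symm_ne.symm]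
  · simp [h, SimpleGraph.Dart.eq_symm_comm (d := d)]

theorem dartEdgeMatrix_transpose_mul : (dartEdgeMatrix G)ᵀ * dartEdgeMatrix G = 2 := by
  ext e e' : 1
  simp only [mul_apply, transpose_apply, dartEdgeMatrix, of_apply, ite_mul, one_mul, zero_mul,
    ← ite_and, ofNat_apply]
  by_cases h : e = e'
  · subst h
    simp [Finset.sum_boole, G.dart_edge_fiber_card e e.2]
  · rw [if_neg h, Nat.cast_zero]
    refine Finset.sum_eq_zero fun d _ => if_neg ?_
    rintro ⟨h₁, h₂⟩
    exact h (Subtype.ext (h₁.symm.trans h₂))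

theorem det_smul_one_sub_psi_quatArcInvMatrix {lam : ℂ} (hlam : lam + 1 ≠ 0) :
    (lam • (1 : Matrix (G.Dart ⊕ G.Dart) (G.Dart ⊕ G.Dart) ℂ) -
      psi (quatArcInvMatrix G)).det = (lam ^ 2 - 1) ^ Fintype.card G.Dart := by
  have hJ : lam • 1 - psi (quatArcInvMatrix G) =
      (lam + 1) • 1 - psi (dartEdgeMatrix G) * psi (dartEdgeMatrix G)ᵀ := by
    rw [← psi_mul, dartEdgeMatrix_mul_transpose, psi_add, psi_one, add_smul, one_smul]
    abel
  have hcard : Fintype.card (G.edgeSet ⊕ G.edgeSet) = Fintype.card G.Dart := by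
    rw [Fintype.card_sum, G.card_edgeSet, G.dart_card_eq_twice_card_edges, two_mul]
  have hsylv := det_smul_one_sub_mul_comm (psi (dartEdgeMatrix G)) (psi (dartEdgeMatrix G)ᵀ)
    (lam + 1)
  rw [← psi_mul (dartEdgeMatrix G)ᵀ, dartEdgeMatrix_transpose_mul, psi_two,
    show (lam + 1) • (1 : Matrix (G.edgeSet ⊕ G.edgeSet) _ ℂ) - 2 = (lam - 1) • 1 by
      rw [← one_add_one_eq_two, add_smul, sub_smul, one_smul]; abel,
    det_smul, det_one, mul_one, hcard, Fintype.card_sum] at hsylv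
  rw [hJ, show lam ^ 2 - 1 = (lam + 1) * (lam - 1) by ring, mul_pow]
  refine mul_left_cancel₀ (pow_ne_zero (Fintype.card G.Dart) hlam) ?_
  rw [hsylv]
  ring

theorem det_smul_one_sub_psi_quatTransition {lam : ℂ} (hlam : lam ^ 2 - 1 ≠ 0) :
    (lam ^ 2 - 1) ^ Fintype.card (V ⊕ V) *
        (lam • (1 : Matrix (G.Dart ⊕ G.Dart) (G.Dart ⊕ G.Dart) ℂ) -
          psi (quatTransition G q)).det =
      (lam ^ 2 - 1) ^ Fintype.card G.Dart *
        (lam ^ 2 • (1 : Matrix (V ⊕ V) (V ⊕ V) ℂ) -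
          lam • psi ((quatWeightMatrix G q)ᵀ) + psi (quatDegMatrix G q) - 1).det := by
  have hlam' : lam + 1 ≠ 0 := fun h => hlam (by linear_combination (lam - 1) * h)
  have hJ : psi (quatArcInvMatrix G) * psi (quatArcInvMatrix G) = 1 := by
    rw [← psi_mul, quatArcInvMatrix_mul_self, psi_one]
  have key := det_smul_one_sub_mul_sub_involution (psi (quatKMatrix G q))
    (psi (quatLMatrix G)ᵀ) hJ lam
  rw [← psi_mul, ← psi_sub, ← quatTransition_eq_mul_sub, ← psi_mul,
    quatLMatrix_transpose_mul_quatKMatrix, ← psi_mul, ← psi_mul,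
    quatLMatrix_transpose_mul_quatArcInvMatrix_mul_quatKMatrix,
    det_smul_one_sub_psi_quatArcInvMatrix G hlam', Fintype.card_sum (α := G.Dart), sub_smul,
    one_smul] at key
  refine mul_right_cancel₀ (pow_ne_zero (Fintype.card G.Dart) hlam) ?_
  rw [key, pow_add, mul_right_comm]
  congr 3
  abel

end Graph

theorem quat_walk_char_poly_general [Fintype V] [DecidableEq V] (G : SimpleGraph V)
    [DecidableRel G.Adj] (n m : ℕ) (hn : n = Fintype.card V)
    (hm : m = G.edgeFinset.card) (q : G.Dart → Quaternion ℝ) :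
    ∀ lam : ℂ,
      (lam ^ 2 - 1) ^ (2 * n) *
          (lam • (1 : Matrix (G.Dart ⊕ G.Dart) (G.Dart ⊕ G.Dart) ℂ) -
            psi (quatTransition G q)).det =
        (lam ^ 2 - 1) ^ (2 * m) *
          (lam ^ 2 • (1 : Matrix (V ⊕ V) (V ⊕ V) ℂ) -
            lam • psi ((quatWeightMatrix G q)ᵀ) + psi (quatDegMatrix G q) - 1).det := by
  have hV : Fintype.card (V ⊕ V) = 2 * n := by rw [Fintype.card_sum, hn, two_mul]
  have hD : Fintype.card G.Dart = 2 * m := by rw [hm, G.dart_card_eq_twice_card_edges]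
  have hdense : Dense {lam : ℂ | lam ^ 2 - 1 ≠ 0} := by
    have h : {lam : ℂ | lam ^ 2 - 1 ≠ 0} = {1, -1}ᶜ := by ext; simp [sub_eq_zero]
    exact h ▸ (Set.toFinite _).countable.dense_compl ℂ
  refine congrFun (Continuous.ext_on hdense (by fun_prop) (by fun_prop) fun lam hlam => ?_)
  simpa only [hV, hD] using det_smul_one_sub_psi_quatTransition G q hlam

/-- for every λ ∈ ℂ,
det(λI_{4m} − ψ(U)) = (λ²−1)^{2m−2n}·det(λ²I_{2n} − λψ(ᵀW) + ψ(D_w) − I_{2n})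
(stated multiplied through by (λ²−1)^{2n} to avoid negative exponents). -/
theorem quat_walk_char_poly [Fintype V] [DecidableEq V] (G : SimpleGraph V)
    [DecidableRel G.Adj] (hG : G.Connected) (n m : ℕ) (hn : n = Fintype.card V)
    (hm : m = G.edgeFinset.card) (q : G.Dart → Quaternion ℝ) :
    ∀ lam : ℂ,
      (lam ^ 2 - 1) ^ (2 * n) *
          (lam • (1 : Matrix (G.Dart ⊕ G.Dart) (G.Dart ⊕ G.Dart) ℂ) -
            psi (quatTransition G q)).det =
        (lam ^ 2 - 1) ^ (2 * m) *
          (lam ^ 2 • (1 : Matrix (V ⊕ V) (V ⊕ V) ℂ) -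
            lam • psi ((quatWeightMatrix G q)ᵀ) + psi (quatDegMatrix G q) - 1).det :=
  quat_walk_char_poly_general G n m hn hm q
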